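/- arXiv:cs/0205045 — 4 statements merged into one kernel-verified Lean document; each statement's English description precedes it below -/
import Mathlib

section
/- Let G be a connected undirected graph with non-negative edge weights, r a vertex, α > 1, and β ≥ 1 + 2/(α−1). Then G contains a spanning tree T such that for every vertex v the distance from r to v in T is at most α times the distance from r to v in G, and the total weight of T is at most β times the weight of a minimum spanning tree of G. -/
open SimpleGraph Finset

/-- Weight of a walk: sum of edge weights along it. -/
noncomputable def walkWeight {V : Type*} {G : SimpleGraph V} (w : Sym2 V → ℝ)
    {u v : V} (p : G.Walk u v) : ℝ :=
  (p.edges.map w).sum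

/-- Shortest-path distance between `u` and `v` in `G` with edge weights `w`. -/
noncomputable def wdist {V : Type*} (G : SimpleGraph V) (w : Sym2 V → ℝ) (u v : V) : ℝ :=
  sInf {x | ∃ p : G.Walk u v, walkWeight w p = x}

open scoped Classical in
/-- Total weight of (the edges of) a graph. -/
noncomputable def gweight {V : Type*} [Fintype V] (G : SimpleGraph V) (w : Sym2 V → ℝ) : ℝ :=
  ∑ e ∈ G.edgeSet.toFinset, w e

/-!
This is the construction of Khuller, Raghavachari and Young. Fix a minimum spanning tree `M` and a
closed walk `W` from `r` through every vertex that uses each edge of `M` at most twice, so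
`w(W) ≤ 2 w(M)`. Walk along `W`, keeping a graph `H` with `M ≤ H ≤ G`, starting from `H = M`;
whenever the current vertex `c` has `d_H(r, c) > α d_G(r, c)`, add a shortest `r`-`c` path of `G`
to `H`. With `a` the current vertex, the potential `w(H) + (d_H(r, a) + w(rest of W)) / (α - 1)`
never increases: an addition at `c` costs `d_G(r, c)` but lowers `d_H(r, c)` from more than
`α d_G(r, c)` to at most `d_G(r, c)`. Hence `w(H) ≤ (1 + 2 / (α - 1)) w(M)` at the end, while
`d_H(r, v) ≤ α d_G(r, v)` for every vertex. A shortest-path tree of `H` rooted at `r` keeps both.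
-/

section

variable {V : Type*} {G H H' : SimpleGraph V} {w : Sym2 V → ℝ} {r u v x : V}

section WalkWeight

lemma walkWeight_nonneg (hw : ∀ e, 0 ≤ w e) (p : G.Walk u v) : 0 ≤ walkWeight w p :=
  List.sum_nonneg <| by simpa using fun e _ => hw e

lemma walkWeight_concat (p : G.Walk u v) (h : G.Adj v x) :
    walkWeight w (p.concat h) = walkWeight w p + w s(v, x) := by
  simp [walkWeight, Walk.edges_concat]

lemma walkWeight_transfer (p : G.Walk u v) (hp : ∀ e ∈ p.edges, e ∈ H.edgeSet) :
    walkWeight w (p.transfer H hp) = walkWeight w p := by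
  simp [walkWeight, Walk.edges_transfer]

lemma walkWeight_bypass_le [DecidableEq V] (hw : ∀ e, 0 ≤ w e) (p : G.Walk u v) :
    walkWeight w p.bypass ≤ walkWeight w p :=
  (p.edges_bypass_sublist_edges.map w).sum_le_sum <| by simpa using fun e _ => hw e

lemma sum_edges_toFinset_le_walkWeight [DecidableEq V] (hw : ∀ e, 0 ≤ w e) (p : G.Walk u v) :
    ∑ e ∈ p.edges.toFinset, w e ≤ walkWeight w p := by
  rw [walkWeight, Finset.sum_list_map_count]
  refine Finset.sum_le_sum fun e he => ?_
  have : 1 ≤ p.edges.count e := List.count_pos_iff.2 (List.mem_toFinset.1 he)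
  simpa using mul_le_mul_of_nonneg_right (Nat.one_le_cast.2 this : (1 : ℝ) ≤ _) (hw e)

end WalkWeight

section Wdist

lemma wdist_le_walkWeight (hw : ∀ e, 0 ≤ w e) (p : G.Walk u v) :
    wdist G w u v ≤ walkWeight w p :=
  csInf_le ⟨0, by rintro _ ⟨q, rfl⟩; exact walkWeight_nonneg hw q⟩ ⟨p, rfl⟩

lemma wdist_nonneg (hw : ∀ e, 0 ≤ w e) (G : SimpleGraph V) (u v : V) : 0 ≤ wdist G w u v :=
  Real.sInf_nonneg <| by rintro _ ⟨p, rfl⟩; exact walkWeight_nonneg hw p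

lemma wdist_self (hw : ∀ e, 0 ≤ w e) (G : SimpleGraph V) (u : V) : wdist G w u u = 0 :=
  le_antisymm (by simpa [walkWeight] using wdist_le_walkWeight hw (Walk.nil : G.Walk u u))
    (wdist_nonneg hw G u u)

variable [Fintype V]

-- The infimum is a minimum: there are finitely many paths, and bypassing makes a walk no heavier.
lemma exists_walkWeight_eq_wdist (hw : ∀ e, 0 ≤ w e) (h : G.Reachable u v) :
    ∃ p : G.Walk u v, walkWeight w p = wdist G w u v := by
  classical
  obtain ⟨q₀⟩ := h
  obtain ⟨p, -, hp⟩ := Finset.exists_min_image Finset.univ (fun p : G.Path u v => walkWeight w p.1)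
    ⟨q₀.toPath, Finset.mem_univ _⟩
  refine ⟨p.1, le_antisymm (le_csInf ⟨_, q₀, rfl⟩ ?_) (wdist_le_walkWeight hw _)⟩
  rintro _ ⟨q, rfl⟩
  exact (hp q.toPath (Finset.mem_univ _)).trans (walkWeight_bypass_le hw q)

lemma wdist_le_wdist_add (hw : ∀ e, 0 ≤ w e) (hreach : G.Reachable r u) (h : G.Adj u v) :
    wdist G w r v ≤ wdist G w r u + w s(u, v) := by
  obtain ⟨p, hp⟩ := exists_walkWeight_eq_wdist hw hreach
  simpa [walkWeight_concat, hp] using wdist_le_walkWeight hw (p.concat h)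

lemma wdist_le_of_le (hw : ∀ e, 0 ≤ w e) (hle : H ≤ H') (h : H.Reachable u v) :
    wdist H' w u v ≤ wdist H w u v := by
  obtain ⟨p, hp⟩ := exists_walkWeight_eq_wdist hw h
  have hp' : ∀ e ∈ p.edges, e ∈ H'.edgeSet := fun e he =>
    edgeSet_mono hle (p.edges_subset_edgeSet he)
  simpa [walkWeight_transfer, hp] using wdist_le_walkWeight hw (p.transfer H' hp')

end Wdist

section Gweight

variable [Fintype V]

lemma gweight_nonneg (hw : ∀ e, 0 ≤ w e) : 0 ≤ gweight G w :=
  Finset.sum_nonneg fun e _ => hw e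

lemma gweight_le_sum_of_edgeSet_subset (hw : ∀ e, 0 ≤ w e) {s : Finset (Sym2 V)}
    (hs : G.edgeSet ⊆ s) : gweight G w ≤ ∑ e ∈ s, w e := by
  classical
  exact Finset.sum_le_sum_of_subset_of_nonneg (by simpa using hs) fun e _ _ => hw e

lemma sum_le_gweight_of_subset_edgeSet (hw : ∀ e, 0 ≤ w e) {s : Finset (Sym2 V)}
    (hs : ↑s ⊆ G.edgeSet) : ∑ e ∈ s, w e ≤ gweight G w := by
  classical
  exact Finset.sum_le_sum_of_subset_of_nonneg (by simpa using hs) fun e _ _ => hw e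

lemma gweight_mono (hw : ∀ e, 0 ≤ w e) (hle : G ≤ H) : gweight G w ≤ gweight H w :=
  sum_le_gweight_of_subset_edgeSet hw <| by simpa using edgeSet_mono hle

lemma gweight_sup_le (hw : ∀ e, 0 ≤ w e) (G H : SimpleGraph V) :
    gweight (G ⊔ H) w ≤ gweight G w + gweight H w := by
  classical
  calc gweight (G ⊔ H) w ≤ ∑ e ∈ G.edgeSet.toFinset ∪ H.edgeSet.toFinset, w e :=
        gweight_le_sum_of_edgeSet_subset hw (by simp)
    _ ≤ ∑ e ∈ G.edgeSet.toFinset ∪ H.edgeSet.toFinset, w e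
          + ∑ e ∈ G.edgeSet.toFinset ∩ H.edgeSet.toFinset, w e :=
        le_add_of_nonneg_right (Finset.sum_nonneg fun e _ => hw e)
    _ = gweight G w + gweight H w := by rw [Finset.sum_union_inter]; rfl

end Gweight

section ShortestPathTree

variable [Fintype V]

lemma exists_isTree_walkWeight_eq_of_parent (r : V) (par : V → V) (rank : V → ℕ) (f : V → ℝ)
    (hr : f r = 0) (hadj : ∀ v, v ≠ r → H.Adj (par v) v)
    (hrank : ∀ v, v ≠ r → rank (par v) < rank v)
    (hf : ∀ v, v ≠ r → f (par v) + w s(par v, v) = f v) :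
    ∃ T ≤ H, T.IsTree ∧ ∀ v, ∃ p : T.Walk r v, walkWeight w p = f v := by
  classical
  set E : Finset (Sym2 V) := (univ.erase r).image fun v => s(par v, v)
  set T := fromEdgeSet (E : Set (Sym2 V))
  have hTadj : ∀ v, v ≠ r → T.Adj (par v) v := fun v hv =>
    (fromEdgeSet_adj _).2 ⟨mem_image_of_mem _ (mem_erase.2 ⟨hv, mem_univ v⟩), (hadj v hv).ne⟩
  have hwalk : ∀ v, ∃ p : T.Walk r v, walkWeight w p = f v := by
    intro v
    induction v using (measure rank).wf.induction with
    | h v ih =>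
      by_cases hv : v = r
      · subst hv
        exact ⟨Walk.nil, by simp [walkWeight, hr]⟩
      · obtain ⟨p, hp⟩ := ih _ (hrank v hv)
        exact ⟨p.concat (hTadj v hv), by rw [walkWeight_concat, hp, hf v hv]⟩
  have hconn : T.Connected := by
    have : Nonempty V := ⟨r⟩
    exact ⟨fun x y => ((hwalk x).choose.reachable.symm.trans (hwalk y).choose.reachable)⟩
  -- A connected graph with at most `|V| - 1` edges is a tree.
  have hcard : Nat.card T.edgeSet ≤ E.card := by
    calc Nat.card T.edgeSet ≤ Nat.card (E : Set (Sym2 V)) :=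
          Nat.card_mono (Set.toFinite _) (by simp [T, edgeSet_fromEdgeSet])
      _ = E.card := by simp
  have hE : E.card + 1 ≤ Nat.card V := by
    have : E.card ≤ (univ.erase r).card := card_image_le
    rw [card_erase_of_mem (mem_univ r), card_univ] at this
    have := Fintype.card_pos_iff.2 ⟨r⟩
    rw [Nat.card_eq_fintype_card]
    omega
  refine ⟨T, ?_, isTree_iff_connected_and_card.2
    ⟨hconn, le_antisymm (by omega) hconn.card_vert_le_card_edgeSet_add_one⟩, hwalk⟩
  rw [← fromEdgeSet_edgeSet H]
  refine fromEdgeSet_mono fun e he => ?_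
  obtain ⟨v, hv, rfl⟩ := mem_image.1 he
  exact hadj v (mem_erase.1 hv).1

lemma wdist_penultimate_of_walkWeight_eq_wdist (hw : ∀ e, 0 ≤ w e) {p : H.Walk u v}
    (hp : walkWeight w p = wdist H w u v) (hnil : ¬p.Nil) :
    walkWeight w p.dropLast = wdist H w u p.penultimate ∧
      wdist H w u p.penultimate + w s(p.penultimate, v) = wdist H w u v := by
  have hsplit : walkWeight w p = walkWeight w p.dropLast + w s(p.penultimate, v) := by
    conv_lhs => rw [← p.concat_dropLast (p.adj_penultimate hnil)]
    exact walkWeight_concat _ _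
  have h₁ := wdist_le_walkWeight hw p.dropLast
  have h₂ := wdist_le_wdist_add hw p.dropLast.reachable (p.adj_penultimate hnil)
  constructor <;> linarith

lemma exists_isTree_wdist_le (hw : ∀ e, 0 ≤ w e) (hH : H.Connected) (r : V) :
    ∃ T ≤ H, T.IsTree ∧ ∀ v, wdist T w r v ≤ wdist H w r v := by
  -- Shortest walks with fewest edges: with zero-weight edges, the penultimate vertices of
  -- arbitrary shortest walks can form a cycle, but the edge count makes them well-founded.
  have hP : ∀ v, ∃ p : H.Walk r v, walkWeight w p = wdist H w r v ∧
      ∀ q : H.Walk r v, walkWeight w q = wdist H w r v → p.length ≤ q.length := by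
    intro v
    obtain ⟨p, hp⟩ := exists_walkWeight_eq_wdist hw (hH.preconnected r v)
    exact ⟨_, Function.argminOn_mem Walk.length {q | walkWeight w q = _} ⟨p, hp⟩,
      fun q hq => Function.argminOn_le Walk.length {q | walkWeight w q = _} hq⟩
  choose P hPw hPmin using hP
  have hnil : ∀ v, v ≠ r → ¬(P v).Nil := fun v hv h => hv h.eq.symm
  have hpar := fun v hv => wdist_penultimate_of_walkWeight_eq_wdist hw (hPw v) (hnil v hv)
  obtain ⟨T, hTH, hT, hTw⟩ := exists_isTree_walkWeight_eq_of_parent r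
    (fun v => (P v).penultimate) (fun v => (P v).length) (wdist H w r) (wdist_self hw H r)
    (fun v hv => (P v).adj_penultimate (hnil v hv))
    (fun v hv => calc
      _ ≤ (P v).dropLast.length := hPmin _ _ (hpar v hv).1
      _ < (P v).length := by
        have := Walk.not_nil_iff_lt_length.1 (hnil v hv)
        rw [Walk.length_dropLast]
        omega)
    (fun v hv => (hpar v hv).2)
  refine ⟨T, hTH, hT, fun v => ?_⟩
  obtain ⟨p, hp⟩ := hTw v
  exact hp ▸ wdist_le_walkWeight hw p

end ShortestPathTree

section CoveringWalk

variable {M : SimpleGraph V} {a b y : V}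

lemma exists_walk_insert_support_subset [DecidableEq V] (hw : ∀ e, 0 ≤ w e)
    (p : M.Walk a u) (q : M.Walk u b) (huy : M.Adj u y) (hy : y ∉ (p.append q).support)
    (hpq : walkWeight w (p.append q) ≤ 2 * ∑ e ∈ (p.append q).edges.toFinset, w e) :
    ∃ W : M.Walk a b, walkWeight w W ≤ 2 * ∑ e ∈ W.edges.toFinset, w e ∧
      insert y (p.append q).support.toFinset ⊆ W.support.toFinset := by
  refine ⟨p.append (.cons huy (.cons huy.symm q)), ?_, fun x hx => ?_⟩
  · have hnew : s(u, y) ∉ (p.append q).edges.toFinset := fun h =>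
      hy ((p.append q).snd_mem_support_of_mem_edges (List.mem_toFinset.1 h))
    have hsub : insert s(u, y) (p.append q).edges.toFinset ⊆
        (p.append (.cons huy (.cons huy.symm q))).edges.toFinset := by
      intro e
      simp +contextual [or_imp]
    have hsum := Finset.sum_le_sum_of_subset_of_nonneg hsub fun e _ _ => hw e
    rw [Finset.sum_insert hnew] at hsum
    have hweight : walkWeight w (p.append (.cons huy (.cons huy.symm q))) =
        walkWeight w (p.append q) + 2 * w s(u, y) := by
      simp only [walkWeight, Walk.edges_append, Walk.edges_cons, List.map_append, List.map_cons,
        List.sum_append, List.sum_cons, Sym2.eq_swap (a := y)]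
      ring
    linarith
  · simp only [Finset.mem_insert, List.mem_toFinset, Walk.mem_support_append_iff,
      Walk.support_cons, List.mem_cons] at hx ⊢
    tauto

variable [Fintype V]

lemma exists_covering_walk_walkWeight_le (hw : ∀ e, 0 ≤ w e) (hM : M.Connected) (r : V) :
    ∃ W : M.Walk r r, (∀ v, v ∈ W.support) ∧ walkWeight w W ≤ 2 * gweight M w := by
  classical
  let S := {W : M.Walk r r | walkWeight w W ≤ 2 * ∑ e ∈ W.edges.toFinset, w e}
  let f := fun W : M.Walk r r => (univ \ W.support.toFinset).card
  have hnil : Walk.nil ∈ S := by simp [S, walkWeight]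
  set W := Function.argminOn f S ⟨_, hnil⟩
  have hWS : W ∈ S := Function.argminOn_mem f S _
  have hcover : ∀ v, v ∈ W.support := by
    by_contra! ⟨v, hv⟩
    obtain ⟨d, -, hd, hdv⟩ :=
      (hM.preconnected r v).some.exists_boundary_dart {x | x ∈ W.support} W.start_mem_support hv
    have hW := W.take_spec hd
    obtain ⟨W', hW'S, hsub⟩ := exists_walk_insert_support_subset hw _ _ d.adj
      (hW ▸ hdv) (by rw [hW]; exact hWS)
    rw [hW] at hsub
    have hlt : f W' < f W := Finset.card_lt_card <| Finset.ssubset_iff_of_subset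
      (sdiff_subset_sdiff le_rfl ((subset_insert _ _).trans hsub)) |>.2
      ⟨d.snd, by simpa using hdv, by simpa using hsub (mem_insert_self _ _)⟩
    exact (Function.argminOn_le f S hW'S).not_gt hlt
  refine ⟨W, hcover, hWS.trans ?_⟩
  gcongr
  exact sum_le_gweight_of_subset_edgeSet hw fun e he => W.edges_subset_edgeSet (by simpa using he)

end CoveringWalk

section LightSupergraph

variable [Fintype V] {G M : SimpleGraph V} {α : ℝ} {c : V}

lemma exists_sup_wdist_le (hw : ∀ e, 0 ≤ w e) (hHG : H ≤ G) (hreach : G.Reachable r c) :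
    ∃ H₁, H ≤ H₁ ∧ H₁ ≤ G ∧ gweight H₁ w ≤ gweight H w + wdist G w r c ∧
      wdist H₁ w r c ≤ wdist G w r c := by
  classical
  obtain ⟨p, hp⟩ := exists_walkWeight_eq_wdist hw hreach
  let P := p.toSubgraph.spanningCoe
  have hP : P.edgeSet = {e | e ∈ p.edges} := by
    ext e
    simp [P, Subgraph.edgeSet_spanningCoe]
  have hpP : ∀ e ∈ p.edges, e ∈ (H ⊔ P).edgeSet := fun e he =>
    edgeSet_mono le_sup_right (hP ▸ he)
  refine ⟨H ⊔ P, le_sup_left, sup_le hHG p.toSubgraph.spanningCoe_le, ?_, ?_⟩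
  · calc gweight (H ⊔ P) w ≤ gweight H w + gweight P w := gweight_sup_le hw H P
      _ ≤ gweight H w + wdist G w r c := by
        gcongr
        calc gweight P w ≤ ∑ e ∈ p.edges.toFinset, w e :=
              gweight_le_sum_of_edgeSet_subset hw (by simp [hP])
          _ ≤ wdist G w r c := hp ▸ sum_edges_toFinset_le_walkWeight hw p
  · simpa [walkWeight_transfer, hp] using wdist_le_walkWeight hw (p.transfer _ hpP)

lemma exists_light_supergraph_of_walk (hw : ∀ e, 0 ≤ w e) (hα : 1 < α) (hM : M.Connected)
    {a b : V} (q : M.Walk a b) (hMH : M ≤ H) (hHG : H ≤ G)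
    (ha : wdist H w r a ≤ α * wdist G w r a) :
    ∃ H', H ≤ H' ∧ H' ≤ G ∧
      gweight H' w ≤ gweight H w + (wdist H w r a + walkWeight w q) / (α - 1) ∧
      ∀ x ∈ q.support, wdist H' w r x ≤ α * wdist G w r x := by
  have hα₁ : 0 < α - 1 := by linarith
  induction q generalizing H with
  | nil =>
    refine ⟨H, le_rfl, hHG, ?_, by simpa using ha⟩
    simp only [walkWeight, Walk.edges_nil, List.map_nil, List.sum_nil, add_zero]
    exact le_add_of_nonneg_right (div_nonneg (wdist_nonneg hw H r _) hα₁.le)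
  | @cons a c b h q ih =>
    have hc : wdist H w r c ≤ wdist H w r a + w s(a, c) :=
      wdist_le_wdist_add hw ((hM.mono hMH).preconnected r a) (hMH h)
    obtain ⟨H', hHH', hH'G, hgw, hdist⟩ : ∃ H', H ≤ H' ∧ H' ≤ G ∧
        gweight H' w ≤ gweight H w + (wdist H w r a + w s(a, c) + walkWeight w q) / (α - 1) ∧
        ∀ x ∈ q.support, wdist H' w r x ≤ α * wdist G w r x := by
      by_cases hcG : wdist H w r c ≤ α * wdist G w r c
      · obtain ⟨H', hHH', hH'G, hgw, hdist⟩ := ih hMH hHG hcG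
        exact ⟨H', hHH', hH'G, hgw.trans (by gcongr), hdist⟩
      -- `c` is too far from `r` in `H`: add a shortest `r`-`c` path of `G`, paid for by the
      -- excess `α d_G(r, c) < d_H(r, a) + w(a, c)`.
      obtain ⟨H₁, hHH₁, hH₁G, hgw₁, hd₁⟩ :=
        exists_sup_wdist_le hw hHG ((hM.mono (hMH.trans hHG)).preconnected r c)
      have hdG := wdist_nonneg hw G r c
      obtain ⟨H', hH₁H', hH'G, hgw, hdist⟩ :=
        ih (hMH.trans hHH₁) hH₁G (hd₁.trans (le_mul_of_one_le_left hdG hα.le))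
      refine ⟨H', hHH₁.trans hH₁H', hH'G, ?_, hdist⟩
      calc gweight H' w
          ≤ gweight H w + wdist G w r c + (wdist G w r c + walkWeight w q) / (α - 1) := by
            have : (wdist H₁ w r c + walkWeight w q) / (α - 1) ≤
                (wdist G w r c + walkWeight w q) / (α - 1) := by gcongr
            linarith
        _ = gweight H w + (α * wdist G w r c + walkWeight w q) / (α - 1) := by
            field_simp
            ring
        _ ≤ _ := by
            gcongr
            linarith [not_le.1 hcG]
    refine ⟨H', hHH', hH'G, by simpa [walkWeight, add_assoc] using hgw, fun x hx => ?_⟩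
    rcases List.mem_cons.1 (Walk.support_cons h q ▸ hx) with rfl | hx
    · exact (wdist_le_of_le hw hHH' ((hM.mono hMH).preconnected r x)).trans ha
    · exact hdist x hx

end LightSupergraph

theorem exists_isTree_wdist_le_mul_gweight_le [Fintype V] {G M : SimpleGraph V} {α : ℝ}
    (hw : ∀ e, 0 ≤ w e) (hα : 1 < α) (hM : M.Connected) (hMG : M ≤ G) (r : V) :
    ∃ T ≤ G, T.IsTree ∧ (∀ v, wdist T w r v ≤ α * wdist G w r v) ∧
      gweight T w ≤ (1 + 2 / (α - 1)) * gweight M w := by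
  obtain ⟨W, hWcover, hWw⟩ := exists_covering_walk_walkWeight_le hw hM r
  obtain ⟨H, hMH, hHG, hHw, hHdist⟩ :=
    exists_light_supergraph_of_walk hw hα hM W le_rfl hMG
      (by rw [wdist_self hw, wdist_self hw, mul_zero])
  obtain ⟨T, hTH, hT, hTdist⟩ := exists_isTree_wdist_le hw (hM.mono hMH) r
  refine ⟨T, hTH.trans hHG, hT, fun v => (hTdist v).trans (hHdist v (hWcover v)), ?_⟩
  have hα₁ : 0 < α - 1 := by linarith
  calc gweight T w ≤ gweight H w := gweight_mono hw hTH
    _ ≤ gweight M w + 2 * gweight M w / (α - 1) := by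
      rw [wdist_self hw, zero_add] at hHw
      exact hHw.trans (by gcongr)
    _ = (1 + 2 / (α - 1)) * gweight M w := by ring

end

/-- Every connected nonnegatively weighted graph contains an
`(α, β)`-LAST rooted at `r` for any `α > 1` and `β ≥ 1 + 2/(α-1)`. -/
theorem exists_LAST {V : Type*} [Fintype V] (G : SimpleGraph V) (w : Sym2 V → ℝ)
    (hw : ∀ e, 0 ≤ w e) (hG : G.Connected) (r : V) (α β : ℝ)
    (hα : 1 < α) (hβ : 1 + 2 / (α - 1) ≤ β) :
    ∃ T : SimpleGraph V, T ≤ G ∧ T.IsTree ∧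
      (∀ v, wdist T w r v ≤ α * wdist G w r v) ∧
      ∀ M : SimpleGraph V, M ≤ G → M.IsTree →
        (∀ M' : SimpleGraph V, M' ≤ G → M'.IsTree → gweight M w ≤ gweight M' w) →
        gweight T w ≤ β * gweight M w := by
  classical
  obtain ⟨T₀, hT₀G, hT₀⟩ := hG.exists_isTree_le
  obtain ⟨M₀, hM₀, hM₀min⟩ := exists_min_image ({T | T ≤ G ∧ T.IsTree} : Finset _)
    (gweight · w) ⟨T₀, by simp [hT₀G, hT₀]⟩
  simp only [mem_filter, mem_univ, true_and] at hM₀ hM₀min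
  obtain ⟨T, hTG, hT, hTdist, hTw⟩ :=
    exists_isTree_wdist_le_mul_gweight_le hw hα hM₀.2.connected hM₀.1 r
  refine ⟨T, hTG, hT, hTdist, fun M hMG hM _ => hTw.trans ?_⟩
  have : 0 ≤ 2 / (α - 1) := div_nonneg zero_le_two (by linarith)
  exact mul_le_mul hβ (hM₀min M ⟨hMG, hM⟩) (gweight_nonneg hw) (by linarith)
end

section
/- Let H be a directed graph with non-negative edge weights in which every vertex is reachable from a root r and every edge lying on a directed cycle has weight zero. Construct a branching as follows: contract each strongly connected component of the subgraph induced by weight-zero edges; for each component not containing r, select a minimum-weight incoming edge; within each component, select a zero-weight branching from the base vertex (the head of the selected incoming edge, or r). Then the selected edges form a branching from r of minimum total weight among all branchings from r in H. -/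
open Finset

/-- A walk in a directed graph (relation) `E`, given as the list of its vertices. -/
def IsDiWalk {V : Type*} (E : V → V → Prop) (u v : V) (l : List V) : Prop :=
  l.head? = some u ∧ l.getLast? = some v ∧ l.Chain' E

/-- Weight of a directed walk: sum of weights of its consecutive pairs. -/
noncomputable def dwalkWeight {V : Type*} (w : V → V → ℝ) (l : List V) : ℝ :=
  ((l.zip l.tail).map fun p => w p.1 p.2).sum

/-- Directed shortest-path distance from `u` to `v`. -/
noncomputable def ddist {V : Type*} (E : V → V → Prop) (w : V → V → ℝ) (u v : V) : ℝ :=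
  sInf {x | ∃ l, IsDiWalk E u v l ∧ dwalkWeight w l = x}

/-- `T` is a branching (spanning arborescence) from `r` in the directed graph `E`:
its edges are edges of `E`, the root has no incoming edge, every other vertex has
exactly one incoming edge, and every vertex is reachable from `r` along `T`. -/
def IsBranching {V : Type*} (E T : V → V → Prop) (r : V) : Prop :=
  (∀ u v, T u v → E u v) ∧ (∀ u, ¬ T u r) ∧ (∀ v, v ≠ r → ∃! u, T u v) ∧
    ∀ v, Relation.ReflTransGen T r v

open scoped Classical in
/-- Total weight of the edges of a directed subgraph `F`. -/
noncomputable def bweight {V : Type*} [Fintype V] (F : V → V → Prop) (w : V → V → ℝ) : ℝ :=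
  ∑ p ∈ Finset.univ.filter (fun p : V × V => F p.1 p.2), w p.1 p.2

/-! After contracting the zero-weight strongly connected components, every branching from `r`
has to enter each component other than that of `r` by an edge from outside, and the greedy edge
is a cheapest such edge; the greedy branching pays for exactly one entering edge per component and
nothing inside the components. It is acyclic because an edge on a directed cycle has weight zero,
so mutually reachable vertices lie in one component and the contracted graph is acyclic. -/

namespace Relation

variable {α : Type*}

theorem equivalence_mutualReach (Z : α → α → Prop) :
    Equivalence fun u v => ReflTransGen Z u v ∧ ReflTransGen Z v u :=
  ⟨fun _ => ⟨.refl, .refl⟩, fun h => ⟨h.2, h.1⟩, fun h k => ⟨h.1.trans k.1, k.2.trans h.2⟩⟩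

theorem ReflTransGen.of_mutual_of_cycle_edges {E Z : α → α → Prop}
    (hZ : ∀ u v, E u v → ReflTransGen E v u → Z u v) {a b : α}
    (hab : ReflTransGen E a b) (hba : ReflTransGen E b a) : ReflTransGen Z a b := by
  induction hab with
  | refl => exact .refl
  | @tail c d hac hcd ih => exact (ih (.head hcd hba)).tail (hZ c d hcd (hba.trans hac))

theorem mutualReach_of_cycle_edges {E Z : α → α → Prop}
    (hZ : ∀ u v, E u v → ReflTransGen E v u → Z u v) {a b : α}
    (hab : ReflTransGen E a b) (hba : ReflTransGen E b a) :
    ReflTransGen Z a b ∧ ReflTransGen Z b a :=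
  ⟨hab.of_mutual_of_cycle_edges hZ hba, hba.of_mutual_of_cycle_edges hZ hab⟩

theorem ReflTransGen.exists_entering_edge {G : α → α → Prop} {S : Set α} {a b : α}
    (hab : ReflTransGen G a b) (ha : a ∉ S) (hb : b ∈ S) : ∃ x y, G x y ∧ x ∉ S ∧ y ∈ S := by
  induction hab with
  | refl => exact absurd hb ha
  | @tail c d _ hcd ih =>
    by_cases hc : c ∈ S
    · exact ih hc
    · exact ⟨c, d, hcd, hc, hb⟩

theorem wellFounded_strictReach [Finite α] (G : α → α → Prop) :
    WellFounded fun a b => ReflTransGen G a b ∧ ¬ ReflTransGen G b a :=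
  have : IsTrans α fun a b => ReflTransGen G a b ∧ ¬ ReflTransGen G b a :=
    ⟨fun _ _ _ hab hbc => ⟨hab.1.trans hbc.1, fun hca => hbc.2 (hca.trans hab.1)⟩⟩
  have : Std.Irrefl fun a b => ReflTransGen G a b ∧ ¬ ReflTransGen G b a :=
    ⟨fun _ h => h.2 .refl⟩
  Finite.wellFounded_of_trans_of_irrefl _

/-- The classes of `s` are unions of strongly connected components of `G`, so following strict
predecessors out of the classes terminates, necessarily in the class of `r`. -/
theorem reflTransGen_of_exists_pred_outside_class [Finite α] {G s : α → α → Prop} {r : α}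
    (hs : ∀ a b, ReflTransGen G a b → ReflTransGen G b a → s a b)
    (hr : ∀ v, s v r → ReflTransGen G r v)
    (hpred : ∀ v, ¬ s v r → ∃ u, ReflTransGen G u v ∧ ¬ s u v) (v : α) :
    ReflTransGen G r v := by
  induction v using (wellFounded_strictReach G).induction with
  | _ v ih =>
    by_cases hvr : s v r
    · exact hr v hvr
    · obtain ⟨u, huv, hnuv⟩ := hpred v hvr
      exact (ih u ⟨huv, fun hvu => hnuv (hs u v huv hvu)⟩).trans huv

end Relation

open Relation

theorem bweight_le_of_key {V α : Type*} [Fintype V] {F G : V → V → Prop} {w : V → V → ℝ}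
    (hw : ∀ u v, 0 ≤ w u v) (κ : V → V → α)
    (hκ : ∀ u v x y, F u v → F x y → w u v ≠ 0 → w x y ≠ 0 → κ u v = κ x y → u = x ∧ v = y)
    (hG : ∀ u v, F u v → w u v ≠ 0 → ∃ x y, G x y ∧ κ x y = κ u v ∧ w u v ≤ w x y) :
    bweight F w ≤ bweight G w := by
  classical
  choose! x y hGxy hκxy hwxy using hG
  set S := univ.filter fun p : V × V => F p.1 p.2 ∧ w p.1 p.2 ≠ 0
  have hinj : Set.InjOn (fun p : V × V => (x p.1 p.2, y p.1 p.2)) S := by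
    intro p hp q hq hpq
    simp only [S, coe_filter, mem_univ, true_and, Set.mem_ofPred_eq] at hp hq
    have hκpq : κ p.1 p.2 = κ q.1 q.2 := by
      rw [← hκxy _ _ hp.1 hp.2, ← hκxy _ _ hq.1 hq.2]
      simp only [Prod.ext_iff] at hpq
      rw [hpq.1, hpq.2]
    obtain ⟨h1, h2⟩ := hκ _ _ _ _ hp.1 hq.1 hp.2 hq.2 hκpq
    exact Prod.ext h1 h2
  calc bweight F w = ∑ p ∈ S, w p.1 p.2 := by
        rw [bweight, ← sum_filter_ne_zero, filter_filter]
    _ ≤ ∑ p ∈ S, w (x p.1 p.2) (y p.1 p.2) := by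
        refine sum_le_sum fun p hp => ?_
        simp only [S, mem_filter, mem_univ, true_and] at hp
        exact hwxy _ _ hp.1 hp.2
    _ = ∑ q ∈ S.image fun p => (x p.1 p.2, y p.1 p.2), w q.1 q.2 :=
        (sum_image (f := fun q => w q.1 q.2) hinj).symm
    _ ≤ bweight G w := by
        rw [bweight]
        refine sum_le_sum_of_subset_of_nonneg (fun q hq => ?_) fun q _ _ => hw q.1 q.2
        obtain ⟨p, hp, rfl⟩ := mem_image.1 hq
        simp only [S, mem_filter, mem_univ, true_and] at hp ⊢
        exact hGxy _ _ hp.1 hp.2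

theorem greedy_branching_optimal_general {V : Type*} [Fintype V]
    (E : V → V → Prop) (w : V → V → ℝ) (hw : ∀ u v, 0 ≤ w u v) (r : V)
    (hcyc : ∀ u v, E u v → Relation.ReflTransGen E v u → w u v = 0)
    (Z : V → V → Prop) (hZ : ∀ u v, Z u v ↔ E u v ∧ w u v = 0)
    (sc : V → V → Prop)
    (hsc : ∀ u v, sc u v ↔ Relation.ReflTransGen Z u v ∧ Relation.ReflTransGen Z v u)
    (F : V → V → Prop) (base : V → V)
    (hFE : ∀ u v, F u v → E u v)
    -- `base` picks one base vertex in each strongly connected component: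
    (hbase_eq : ∀ u v, sc u v → base u = base v)
    (hbase_r : base r = r)
    -- for each component not containing `r`, the chosen incoming edge enters the base
    -- and has minimum weight among all edges entering the component:
    (hchoice : ∀ v, ¬ sc v r → ∃ u, F u (base v) ∧ ¬ sc u v ∧
        ∀ x y, E x y → sc y v → ¬ sc x y → w u (base v) ≤ w x y)
    (hbase_in : ∀ v, ¬ sc v r → ∃! u, F u (base v))
    (hinter : ∀ u v, F u v → ¬ sc u v → v = base v)
    -- intra-component edges of `F` have weight zero and form branchings from the bases:
    (hintra : ∀ u v, F u v → sc u v → w u v = 0)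
    (hin : ∀ v, v ≠ base v → (∃! u, F u v) ∧ ∀ u, F u v → sc u v)
    (hroot : ∀ u, ¬ F u r)
    (hreachF : ∀ v, Relation.ReflTransGen (fun a b => F a b ∧ sc a b) (base v) v) :
    IsBranching E F r ∧
      ∀ F' : V → V → Prop, IsBranching E F' r → bweight F w ≤ bweight F' w := by
  have hs : Equivalence sc := funext₂ (fun u v => propext (hsc u v)) ▸ equivalence_mutualReach Z
  have hsF (a b : V) (hab : ReflTransGen F a b) (hba : ReflTransGen F b a) : sc a b :=
    (hsc a b).2 <| mutualReach_of_cycle_edges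
      (fun u v huv hvu => (hZ u v).2 ⟨huv, hcyc u v huv hvu⟩)
      (ReflTransGen.mono hFE a b hab) (ReflTransGen.mono hFE b a hba)
  have hbase_of_sc (v : V) (hv : sc v r) : base v = r := (hbase_eq v r hv).trans hbase_r
  have hreach_base (v : V) : ReflTransGen F (base v) v :=
    ReflTransGen.mono (fun _ _ h => h.1) _ _ (hreachF v)
  have hbranch : IsBranching E F r := by
    refine ⟨hFE, hroot, fun v hvr => ?_, reflTransGen_of_exists_pred_outside_class hsF
      (fun v h => hbase_of_sc v h ▸ hreach_base v) fun v hv => ?_⟩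
    · by_cases hv : v = base v
      · exact hv ▸ hbase_in v fun h => hvr (hv.trans (hbase_of_sc v h))
      · exact (hin v hv).1
    · obtain ⟨u, hu, hnuv, -⟩ := hchoice v hv
      exact ⟨u, .head hu (hreach_base v), hnuv⟩
  have hheavy (u v : V) (huv : F u v) (hw0 : w u v ≠ 0) :
      base v = v ∧ ¬ sc v r ∧ ∀ u', F u' v → u' = u :=
    have hv : base v = v := (hinter u v huv fun h => hw0 (hintra u v huv h)).symm
    have hvr : ¬ sc v r := fun h => hroot u (hv.symm.trans (hbase_of_sc v h) ▸ huv)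
    ⟨hv, hvr, fun _ hu' => (hbranch.2.2.1 v fun h => hvr (h ▸ hs.refl v)).unique hu' huv⟩
  refine ⟨hbranch, fun F' hF' => bweight_le_of_key hw (fun _ v => base v) ?_ ?_⟩
  · intro u v x y huv hxy hwuv hwxy hvy
    obtain ⟨hv, -, huniq⟩ := hheavy u v huv hwuv
    obtain rfl : v = y := hv.symm.trans (hvy.trans (hheavy x y hxy hwxy).1)
    exact ⟨(huniq x hxy).symm, rfl⟩
  · intro u v huv hwuv
    obtain ⟨hv, hvr, huniq⟩ := hheavy u v huv hwuv
    obtain ⟨x, y, hxy, hx, hy⟩ := (hF'.2.2.2 v).exists_entering_edge (S := {y | sc y v})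
      (fun h => hvr (hs.symm h)) (hs.refl v)
    obtain ⟨u', hu', -, hmin⟩ := hchoice v hvr
    rw [hv] at hu' hmin
    refine ⟨x, y, hxy, hbase_eq y v hy, huniq u' hu' ▸ hmin x y (hF'.1 x y hxy) hy ?_⟩
    exact fun h => hx (hs.trans h hy)

/-- Correctness of the greedy branching construction: in a directed
graph in which every vertex is reachable from `r` and every edge on a directed cycle
has weight zero, suppose `F` is obtained by contracting the strongly connected
components of the zero-weight subgraph (`sc` is the same-component relation), choosing
for each component not containing `r` a minimum-weight incoming edge (into the
component's base vertex), and choosing inside each component a zero-weight branching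
from its base. Then `F` is a branching from `r` of minimum total weight. -/
theorem greedy_branching_optimal {V : Type*} [Fintype V]
    (E : V → V → Prop) (w : V → V → ℝ) (hw : ∀ u v, 0 ≤ w u v) (r : V)
    (hreach : ∀ v, Relation.ReflTransGen E r v)
    (hcyc : ∀ u v, E u v → Relation.ReflTransGen E v u → w u v = 0)
    (Z : V → V → Prop) (hZ : ∀ u v, Z u v ↔ E u v ∧ w u v = 0)
    (sc : V → V → Prop)
    (hsc : ∀ u v, sc u v ↔ Relation.ReflTransGen Z u v ∧ Relation.ReflTransGen Z v u)
    (F : V → V → Prop) (base : V → V)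
    (hFE : ∀ u v, F u v → E u v)
    -- `base` picks one base vertex in each strongly connected component:
    (hbase_comp : ∀ v, sc (base v) v)
    (hbase_eq : ∀ u v, sc u v → base u = base v)
    (hbase_r : base r = r)
    -- for each component not containing `r`, the chosen incoming edge enters the base
    -- and has minimum weight among all edges entering the component:
    (hchoice : ∀ v, ¬ sc v r → ∃ u, F u (base v) ∧ ¬ sc u v ∧
        ∀ x y, E x y → sc y v → ¬ sc x y → w u (base v) ≤ w x y)
    (hbase_in : ∀ v, ¬ sc v r → ∃! u, F u (base v))
    (hinter : ∀ u v, F u v → ¬ sc u v → v = base v)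
    -- intra-component edges of `F` have weight zero and form branchings from the bases:
    (hintra : ∀ u v, F u v → sc u v → w u v = 0)
    (hin : ∀ v, v ≠ base v → (∃! u, F u v) ∧ ∀ u, F u v → sc u v)
    (hroot : ∀ u, ¬ F u r)
    (hreachF : ∀ v, Relation.ReflTransGen (fun a b => F a b ∧ sc a b) (base v) v) :
    IsBranching E F r ∧
      ∀ F' : V → V → Prop, IsBranching E F' r → bweight F w ≤ bweight F' w :=
  greedy_branching_optimal_general E w hw r hcyc Z hZ sc hsc F base hFE hbase_eq hbase_r hchoice
    hbase_in hinter hintra hin hroot hreachF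
end

section
/- In any branching from root r of a directed graph, for every strongly connected component S (of any subgraph) with r ∉ S, at least one edge of the branching enters S from outside S. Consequently, the weight of any branching is at least the sum over all such components of the minimum weight of an edge entering that component. -/
open Finset

/-- In any branching from `r`: every set `S` of vertices not containing
`r` (in particular every strongly connected component of any subgraph) is entered by at
least one branching edge; consequently, for any family of pairwise disjoint such sets
`S i` with `μ i` a lower bound on the weight of every edge entering `S i`, the weight of
the branching is at least `Σ μ i`. -/
theorem branching_weight_lower_bound {V : Type*} [Fintype V]
    (E : V → V → Prop) (w : V → V → ℝ) (hw : ∀ u v, 0 ≤ w u v) (r : V)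
    (F : V → V → Prop) (hF : IsBranching E F r) :
    (∀ S : Set V, r ∉ S → S.Nonempty → ∃ x y, F x y ∧ y ∈ S ∧ x ∉ S) ∧
      ∀ (k : ℕ) (S : Fin k → Set V) (μ : Fin k → ℝ),
        (∀ i, r ∉ S i) → (∀ i, (S i).Nonempty) →
        (Pairwise fun i i' => Disjoint (S i) (S i')) →
        (∀ i x y, E x y → y ∈ S i → x ∉ S i → μ i ≤ w x y) →
        ∑ i, μ i ≤ bweight F w := by
  classical
  obtain ⟨hFE, hnr, huniq, hreach⟩ := hF
  have key : ∀ S : Set V, r ∉ S → S.Nonempty → ∃ x y, F x y ∧ y ∈ S ∧ x ∉ S := by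
    intro S hrS hS
    obtain ⟨y0, hy0⟩ := hS
    have main : ∀ z, Relation.ReflTransGen F r z → z ∈ S → ∃ x y, F x y ∧ y ∈ S ∧ x ∉ S := by
      intro z hz
      induction hz with
      | refl => intro h; exact absurd h hrS
      | @tail b c h1 h2 ih =>
        intro hc
        by_cases hb : b ∈ S
        · exact ih hb
        · exact ⟨b, c, h2, hc, hb⟩
    exact main y0 (hreach y0) hy0
  refine ⟨key, ?_⟩
  intro k S μ hr hne hdisj hμ
  choose x y hFxy hyS hxS using fun i => key (S i) (hr i) (hne i)
  have hinj : Function.Injective (fun i => (x i, y i)) := by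
    intro i j hij
    by_contra hne'
    exact (Set.disjoint_left.mp (hdisj hne') (hyS i))
      (by rw [show y i = y j from congrArg Prod.snd hij]; exact hyS j)
  calc ∑ i, μ i ≤ ∑ i, w (x i) (y i) :=
        Finset.sum_le_sum fun i _ => hμ i (x i) (y i) (hFE _ _ (hFxy i)) (hyS i) (hxS i)
    _ = ∑ p ∈ Finset.univ.image (fun i => (x i, y i)), w p.1 p.2 := by
        rw [Finset.sum_image (fun a _ b _ h => hinj h)]
    _ ≤ bweight F w := by
        rw [bweight]
        refine Finset.sum_le_sum_of_subset_of_nonneg ?_ fun p _ _ => hw p.1 p.2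
        intro p hp
        simp only [Finset.mem_image, Finset.mem_univ, true_and] at hp ⊢
        obtain ⟨i, rfl⟩ := hp
        simp [Finset.mem_filter, hFxy i]
end

section
/- Given a directed graph G with non-negative edge weights, a root r from which all vertices are reachable, and any shortest-path tree of G rooted at r, a minimum-weight shortest-path tree rooted at r exists; moreover its weight equals the sum, over all strongly connected components S (not containing r) of the zero-weight subgraph of the shortest-path subgraph, of the minimum weight of a shortest-path-subgraph edge entering S. -/
/-!
A distance-preserving branching is the same thing as a spanning branching of the shortest-path
subgraph `SP`. Such a branching must enter every zero-weight component `S` not containing `r`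
through an `SP`-edge, which costs at least the minimum `μ S`, and all its other edges cost at
least `0`. Conversely, keep the zero-weight edges inside the components together with one
minimum-weight entering edge per component. The root still reaches every vertex in this graph:
induct along the condensation of `SP`, which is acyclic because `SP`-cycles have weight zero.
A branching of this graph pays exactly one `μ S` per component.
-/

open Finset

open Relation

section Walks
variable {V : Type*} {R S : V → V → Prop} {w : V → V → ℝ} {u v x : V} {l : List V}

namespace IsDiWalk

lemma singleton (u : V) : IsDiWalk R u u [u] :=
  ⟨rfl, rfl, List.isChain_singleton u⟩

lemma mono (h : IsDiWalk R u v l) (hRS : ∀ a b, R a b → S a b) : IsDiWalk S u v l :=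
  ⟨h.1, h.2.1, h.2.2.imp fun {a b} => hRS a b⟩

lemma append_singleton (h : IsDiWalk R u v l) (hvx : R v x) : IsDiWalk R u x (l ++ [x]) := by
  obtain ⟨hhead, hlast, hchain⟩ := h
  have hne : l ≠ [] := by rintro rfl; simp at hhead
  refine ⟨by rwa [List.head?_append_of_ne_nil _ hne], by simp, ?_⟩
  refine List.isChain_append.2 ⟨hchain, List.isChain_singleton x, ?_⟩
  intro a ha b hb
  simp only [hlast, Option.mem_def, Option.some.injEq, List.head?_cons] at ha hb
  exact ha ▸ hb ▸ hvx

lemma exists_eq_append_singleton (h : IsDiWalk R u v l) (hvu : v ≠ u) :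
    ∃ l' x, IsDiWalk R u x l' ∧ R x v ∧ l = l' ++ [v] := by
  obtain ⟨hhead, hlast, hchain⟩ := h
  obtain rfl | ⟨l', b, rfl⟩ := l.eq_nil_or_concat
  · simp at hhead
  rw [List.concat_eq_append] at hhead hlast hchain ⊢
  obtain rfl : b = v := by simpa using hlast
  have hne : l' ≠ [] := by rintro rfl; exact hvu (by simpa using hhead)
  obtain ⟨x, hx⟩ := Option.isSome_iff_exists.mp (List.getLast?_isSome.mpr hne)
  obtain ⟨hchain', -, hjoin⟩ := List.isChain_append.1 hchain
  exact ⟨l', x, ⟨by rwa [List.head?_append_of_ne_nil _ hne] at hhead, hx, hchain'⟩,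
    hjoin x hx b rfl, rfl⟩

end IsDiWalk

lemma exists_isDiWalk_of_reflTransGen (h : ReflTransGen R u v) : ∃ l, IsDiWalk R u v l := by
  induction h with
  | refl => exact ⟨_, .singleton u⟩
  | tail _ hbc ih =>
    obtain ⟨l, hl⟩ := ih
    exact ⟨_, hl.append_singleton hbc⟩

lemma dwalkWeight_nonneg (hw : ∀ u v, 0 ≤ w u v) (l : List V) : 0 ≤ dwalkWeight w l :=
  List.sum_nonneg fun _ hx => by
    obtain ⟨p, -, rfl⟩ := List.mem_map.1 hx
    exact hw _ _

lemma dwalkWeight_singleton (u : V) : dwalkWeight w [u] = 0 := by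
  simp [dwalkWeight]

lemma dwalkWeight_append_singleton (hl : l.getLast? = some x) (y : V) :
    dwalkWeight w (l ++ [y]) = dwalkWeight w l + w x y := by
  induction l with
  | nil => simp at hl
  | cons a t ih =>
    cases t with
    | nil =>
      obtain rfl : a = x := by simpa using hl
      simp [dwalkWeight]
    | cons b t =>
      have := ih (by rwa [List.getLast?_cons_cons] at hl)
      simp only [dwalkWeight, List.cons_append, List.zip_cons_cons, List.map_cons,
        List.sum_cons, List.tail_cons] at this ⊢
      linarith

end Walks

section Distance
variable {V : Type*} {E T : V → V → Prop} {w : V → V → ℝ} {r u v : V} {l : List V}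

lemma ddist_le (hw : ∀ u v, 0 ≤ w u v) (hl : IsDiWalk E u v l) :
    ddist E w u v ≤ dwalkWeight w l :=
  csInf_le ⟨0, by rintro _ ⟨l, -, rfl⟩; exact dwalkWeight_nonneg hw l⟩ ⟨l, hl, rfl⟩

lemma le_ddist {c : ℝ} (huv : ReflTransGen E u v)
    (h : ∀ l, IsDiWalk E u v l → c ≤ dwalkWeight w l) : c ≤ ddist E w u v := by
  obtain ⟨l, hl⟩ := exists_isDiWalk_of_reflTransGen huv
  exact le_csInf ⟨_, l, hl, rfl⟩ (by rintro _ ⟨l, hl, rfl⟩; exact h l hl)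

lemma ddist_self (hw : ∀ u v, 0 ≤ w u v) (u : V) : ddist E w u u = 0 :=
  le_antisymm (dwalkWeight_singleton (w := w) u ▸ ddist_le hw (.singleton u))
    (le_ddist .refl fun l _ => dwalkWeight_nonneg hw l)

lemma ddist_le_ddist_add (hw : ∀ u v, 0 ≤ w u v) (hru : ReflTransGen E r u) (huv : E u v) :
    ddist E w r v ≤ ddist E w r u + w u v := by
  rw [← sub_le_iff_le_add]
  refine le_ddist hru fun l hl => sub_le_iff_le_add.2 ?_
  rw [← dwalkWeight_append_singleton hl.2.1]
  exact ddist_le hw (hl.append_singleton huv)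

lemma ddist_le_ddist_of_le (hw : ∀ u v, 0 ≤ w u v) (hTE : ∀ a b, T a b → E a b)
    (huv : ReflTransGen T u v) : ddist E w u v ≤ ddist T w u v :=
  le_ddist huv fun _ hl => ddist_le hw (hl.mono hTE)

end Distance

section Branching
variable {V : Type*} {R : V → V → Prop} {r : V}

lemma exists_isBranching_of_descent (f : V → ℕ)
    (h : ∀ v, v ≠ r → ∃ u, R u v ∧ f u < f v) : ∃ T, IsBranching R T r := by
  choose! parent hparent using h
  refine ⟨fun u v => v ≠ r ∧ u = parent v, ?_, fun u h => h.1 rfl,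
    fun v hv => ⟨parent v, ⟨hv, rfl⟩, fun u h => h.2⟩, fun v => ?_⟩
  · rintro u v ⟨hv, rfl⟩
    exact (hparent v hv).1
  induction hf : f v using Nat.strong_induction_on generalizing v with
  | _ n ih =>
    by_cases hv : v = r
    · exact hv ▸ .refl
    · exact (ih _ (hf ▸ (hparent v hv).2) _ rfl).tail ⟨hv, rfl⟩

lemma exists_isBranching (h : ∀ v, ReflTransGen R r v) : ∃ T, IsBranching R T r := by
  classical
  have hlen : ∀ v, ∃ n, ∃ l, IsDiWalk R r v l ∧ l.length = n := fun v =>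
    let ⟨l, hl⟩ := exists_isDiWalk_of_reflTransGen (h v); ⟨_, l, hl, rfl⟩
  refine exists_isBranching_of_descent (fun v => Nat.find (hlen v)) fun v hv => ?_
  obtain ⟨l, hl, hlen_l⟩ := Nat.find_spec (hlen v)
  obtain ⟨l', u, hl', huv, rfl⟩ := hl.exists_eq_append_singleton hv
  refine ⟨u, huv, (Nat.find_le ⟨l', hl', rfl⟩).trans_lt ?_⟩
  simp [← hlen_l]

end Branching

section ShortestPaths
variable {V : Type*} {E T : V → V → Prop} {w : V → V → ℝ} {r u v : V}

def spGraph (E : V → V → Prop) (w : V → V → ℝ) (r : V) (u v : V) : Prop :=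
  E u v ∧ ddist E w r u + w u v = ddist E w r v

lemma ddist_eq_of_forall_spGraph (hw : ∀ u v, 0 ≤ w u v)
    (hTSP : ∀ a b, T a b → spGraph E w r a b) (hT : ∀ v, ReflTransGen T r v) (v : V) :
    ddist T w r v = ddist E w r v := by
  have tight : ∀ v, ReflTransGen T r v →
      ∃ l, IsDiWalk T r v l ∧ dwalkWeight w l = ddist E w r v := by
    intro v hv
    induction hv with
    | refl => exact ⟨_, .singleton r, by rw [dwalkWeight_singleton, ddist_self hw]⟩
    | tail _ hab ih =>
      obtain ⟨l, hl, hwl⟩ := ih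
      refine ⟨_, hl.append_singleton hab, ?_⟩
      rw [dwalkWeight_append_singleton hl.2.1, hwl, (hTSP _ _ hab).2]
  obtain ⟨l, hl, hwl⟩ := tight v (hT v)
  exact le_antisymm (hwl ▸ ddist_le hw hl)
    (ddist_le_ddist_of_le hw (fun a b h => (hTSP a b h).1) (hT v))

/-- Every `T`-walk to `v` ends with the edge `u → v`, so `d_T(v) ≥ d_T(u) + w(u, v)`. -/
lemma IsBranching.spGraph_of_ddist_eq (hw : ∀ u v, 0 ≤ w u v) (hT : IsBranching E T r)
    (hd : ∀ v, ddist T w r v = ddist E w r v) (huv : T u v) : spGraph E w r u v := by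
  obtain ⟨hTE, hroot, hparent, hreach⟩ := hT
  have hv : v ≠ r := fun h => hroot u (h ▸ huv)
  refine ⟨hTE u v huv, le_antisymm ?_
    (ddist_le_ddist_add hw (ReflTransGen.mono hTE _ _ (hreach u)) (hTE u v huv))⟩
  rw [← hd u, ← hd v]
  refine le_ddist (hreach v) fun l hl => ?_
  obtain ⟨l', x, hl', hxv, rfl⟩ := hl.exists_eq_append_singleton hv
  obtain rfl : x = u := (hparent v hv).unique hxv huv
  rw [dwalkWeight_append_singleton hl'.2.1]
  exact add_le_add_left (ddist_le hw hl') _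

end ShortestPaths

section Components
variable {V : Type*} {R G : V → V → Prop} {w : V → V → ℝ} {u v : V}

def SameComponent (R : V → V → Prop) (u v : V) : Prop :=
  ReflTransGen R u v ∧ ReflTransGen R v u

lemma equivalence_sameComponent (R : V → V → Prop) : Equivalence (SameComponent R) :=
  ⟨fun _ => ⟨.refl, .refl⟩, fun h => ⟨h.2, h.1⟩,
    fun h h' => ⟨h.1.trans h'.1, h'.2.trans h.2⟩⟩

lemma SameComponent.reflTransGen_inner (h : SameComponent R u v) :
    ReflTransGen (fun a b => R a b ∧ SameComponent R a b) u v := by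
  obtain ⟨huv, hvu⟩ := h
  induction huv using ReflTransGen.head_induction_on with
  | refl => exact .refl
  | head hac hcv ih =>
    exact .head ⟨hac, .single hac, hcv.trans hvu⟩ (ih (hvu.tail hac))

def zeroSubgraph (G : V → V → Prop) (w : V → V → ℝ) (u v : V) : Prop :=
  G u v ∧ w u v = 0

variable {d : V → ℝ} (hw : ∀ u v, 0 ≤ w u v) (hG : ∀ a b, G a b → d a + w a b = d b)
include hw hG

lemma le_of_reflTransGen_tight (huv : ReflTransGen G u v) : d u ≤ d v := by
  induction huv with
  | refl => rfl
  | @tail b c _ hbc ih => linarith [hG b c hbc, hw b c]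

lemma reflTransGen_zeroSubgraph (huv : ReflTransGen G u v) (hvu : d v ≤ d u) :
    ReflTransGen (zeroSubgraph G w) u v := by
  induction huv using ReflTransGen.head_induction_on with
  | refl => exact .refl
  | @head a c hac hcv ih =>
    have := le_of_reflTransGen_tight hw hG hcv
    have := hG a c hac
    exact .head ⟨hac, by linarith [hw a c]⟩ (ih (by linarith [hw a c]))

lemma sameComponent_zeroSubgraph (huv : ReflTransGen G u v) (hvu : ReflTransGen G v u) :
    SameComponent (zeroSubgraph G w) u v :=
  ⟨reflTransGen_zeroSubgraph hw hG huv (le_of_reflTransGen_tight hw hG hvu),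
    reflTransGen_zeroSubgraph hw hG hvu (le_of_reflTransGen_tight hw hG huv)⟩

end Components

section Entering
variable {V : Type*} {R G s : V → V → Prop} {w : V → V → ℝ} {r u v : V}

lemma exists_enter_of_reflTransGen {P : V → Prop} (huv : ReflTransGen R u v) (hu : ¬ P u)
    (hv : P v) : ∃ a b, R a b ∧ ¬ P a ∧ P b := by
  induction huv with
  | refl => exact absurd hv hu
  | @tail b c _ hbc ih =>
    by_cases hb : P b
    · exact ih hb
    · exact ⟨b, c, hbc, hb, hv⟩

def IsMinEntering (G s : V → V → Prop) (w : V → V → ℝ) (v : V) (p : V × V) : Prop :=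
  G p.1 p.2 ∧ s p.2 v ∧ ¬ s p.1 p.2 ∧
    ∀ a b, G a b → s b v → ¬ s a b → w p.1 p.2 ≤ w a b

lemma IsMinEntering.isLeast {p : V × V} (hp : IsMinEntering G s w v p) :
    IsLeast {x | ∃ a b, G a b ∧ s b v ∧ ¬ s a b ∧ w a b = x} (w p.1 p.2) :=
  ⟨⟨p.1, p.2, hp.1, hp.2.1, hp.2.2.1, rfl⟩,
    by rintro _ ⟨a, b, hab, hbv, hba, rfl⟩; exact hp.2.2.2 a b hab hbv hba⟩

lemma IsMinEntering.of_rel (hs : Equivalence s) {p : V × V} (hp : IsMinEntering G s w v p)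
    (huv : s u v) : IsMinEntering G s w u p :=
  ⟨hp.1, hs.trans hp.2.1 (hs.symm huv), hp.2.2.1,
    fun a b hab hbu => hp.2.2.2 a b hab (hs.trans hbu huv)⟩

lemma exists_isMinEntering [Finite V] (hs : Equivalence s) (w : V → V → ℝ)
    (hreach : ∀ v, ReflTransGen G r v) :
    ∃ F : V → V × V, (∀ u v, s u v → F u = F v) ∧
      ∀ v, ¬ s v r → IsMinEntering G s w v (F v) := by
  classical
  have := Fintype.ofFinite V
  let S : Setoid V := ⟨s, hs⟩
  have hpick : ∀ q : Quotient S, ∃ p,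
      ∀ v, ⟦v⟧ = q → ¬ s v r → IsMinEntering G s w v p := by
    refine Quotient.ind fun v₀ => ?_
    by_cases hv₀ : s v₀ r
    · exact ⟨(r, r), fun v hv hvr => absurd (hs.trans (Quotient.exact hv) hv₀) hvr⟩
    obtain ⟨a, b, hab, hbr, hbv⟩ := exists_enter_of_reflTransGen (P := (s · v₀))
      (hreach v₀) (fun h => hv₀ (hs.symm h)) (hs.refl v₀)
    obtain ⟨p, hp, hmin⟩ := Finset.exists_min_image
      (Finset.univ.filter fun p : V × V => G p.1 p.2 ∧ s p.2 v₀ ∧ ¬ s p.1 p.2)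
      (fun p => w p.1 p.2) ⟨(a, b), by simpa [hab, hbv] using fun h => hbr (hs.trans h hbv)⟩
    simp only [Finset.mem_filter, Finset.mem_univ, true_and] at hp hmin
    have hp' : IsMinEntering G s w v₀ p :=
      ⟨hp.1, hp.2.1, hp.2.2, fun a b hab hbv hba => hmin (a, b) ⟨hab, hbv, hba⟩⟩
    exact ⟨p, fun v hv _ => hp'.of_rel hs (Quotient.exact hv)⟩
  choose pick hpick using hpick
  exact ⟨fun v => pick ⟦v⟧, fun u v huv => congrArg pick (Quotient.sound huv),
    fun v => hpick _ v rfl⟩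

def entryGraph (Z : V → V → Prop) (r : V) (F : V → V × V) (a b : V) : Prop :=
  (Z a b ∧ SameComponent Z a b) ∨ (¬ SameComponent Z b r ∧ (a, b) = F b)

lemma reflTransGen_entryGraph [Finite V] {Z : V → V → Prop} (hZG : ∀ a b, Z a b → G a b)
    (hcyc : ∀ u v, ReflTransGen G u v → ReflTransGen G v u → SameComponent Z u v)
    {F : V → V × V} (hF : ∀ u v, SameComponent Z u v → F u = F v)
    (hFG : ∀ v, ¬ SameComponent Z v r →
      G (F v).1 (F v).2 ∧ SameComponent Z (F v).2 v ∧ ¬ SameComponent Z (F v).1 (F v).2)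
    (v : V) : ReflTransGen (entryGraph Z r F) r v := by
  have hs := equivalence_sameComponent Z
  have hinner : ∀ {a b}, SameComponent Z a b → ReflTransGen (entryGraph Z r F) a b :=
    fun h => ReflTransGen.mono (fun _ _ h => .inl h) _ _ h.reflTransGen_inner
  let below : V → V → Prop := fun a b => ReflTransGen G a b ∧ ¬ ReflTransGen G b a
  have : IsTrans V below := ⟨fun a b c hab hbc =>
    ⟨hab.1.trans hbc.1, fun hca => hbc.2 (hca.trans hab.1)⟩⟩
  have : Std.Irrefl below := ⟨fun a h => h.2 h.1⟩
  refine (Finite.wellFounded_of_trans_of_irrefl below).induction v fun v ih => ?_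
  by_cases hvr : SameComponent Z v r
  · exact hinner (hs.symm hvr)
  obtain ⟨hab, hbv, hab'⟩ := hFG v hvr
  have hGbv : ReflTransGen G (F v).2 v := ReflTransGen.mono hZG _ _ hbv.1
  have hbelow : below (F v).1 v :=
    ⟨.head hab hGbv, fun hva => hab' (hcyc _ _ (.single hab) (hGbv.trans hva))⟩
  have hentry : entryGraph Z r F (F v).1 (F v).2 :=
    .inr ⟨fun h => hvr (hs.trans (hs.symm hbv) h), by rw [hF _ _ hbv]⟩
  exact ((ih _ hbelow).tail hentry).trans (hinner hbv)

end Entering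

section Weight
variable {V : Type*} [Fintype V] {T s : V → V → Prop} {w : V → V → ℝ} {r : V}
  {Reps : Finset V}

lemma sum_le_bweight (hs : Equivalence s) (hw : ∀ u v, 0 ≤ w u v)
    (hT : ∀ v, ReflTransGen T r v) {μ : V → ℝ} (hr : ∀ v ∈ Reps, ¬ s v r)
    (hdisj : ∀ v ∈ Reps, ∀ u ∈ Reps, v ≠ u → ¬ s v u)
    (hμ : ∀ v ∈ Reps, ∀ a b, T a b → s b v → ¬ s a b → μ v ≤ w a b) :
    ∑ v ∈ Reps, μ v ≤ bweight T w := by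
  classical
  let enter : V → Finset (V × V) := fun v =>
    Finset.univ.filter fun p => T p.1 p.2 ∧ s p.2 v ∧ ¬ s p.1 p.2
  have hdisj' : (Reps : Set V).PairwiseDisjoint enter := by
    refine fun v hv u hu hvu => Finset.disjoint_left.2 fun p hpv hpu => ?_
    simp only [enter, Finset.mem_filter, Finset.mem_univ, true_and] at hpv hpu
    exact hdisj v hv u hu hvu (hs.trans (hs.symm hpv.2.1) hpu.2.1)
  calc ∑ v ∈ Reps, μ v ≤ ∑ v ∈ Reps, ∑ p ∈ enter v, w p.1 p.2 := by
        refine Finset.sum_le_sum fun v hv => ?_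
        obtain ⟨a, b, hab, hav, hbv⟩ := exists_enter_of_reflTransGen (P := (s · v)) (hT v)
          (fun h => hr v hv (hs.symm h)) (hs.refl v)
        have hmem : (a, b) ∈ enter v := by
          simpa [enter, hab, hbv] using fun h => hav (hs.trans h hbv)
        exact (hμ v hv a b hab hbv fun h => hav (hs.trans h hbv)).trans
          (Finset.single_le_sum (fun p _ => hw p.1 p.2) hmem)
    _ = ∑ p ∈ Reps.biUnion enter, w p.1 p.2 := (Finset.sum_biUnion hdisj').symm
    _ ≤ bweight T w := by
        refine Finset.sum_le_sum_of_subset_of_nonneg (fun p hp => ?_) fun p _ _ => hw p.1 p.2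
        obtain ⟨v, -, hp⟩ := Finset.mem_biUnion.1 hp
        simp only [enter, Finset.mem_filter] at hp
        simpa using hp.2.1

lemma bweight_le_sum (hw : ∀ u v, 0 ≤ w u v) {F : V → V × V}
    (hF : ∀ u v, s u v → F u = F v)
    (hcover : ∀ u, ¬ s u r → ∃ v ∈ Reps, s u v)
    (hT : ∀ a b, T a b → w a b = 0 ∨ (¬ s b r ∧ (a, b) = F b)) :
    bweight T w ≤ ∑ v ∈ Reps, w (F v).1 (F v).2 := by
  classical
  calc bweight T w
      = ∑ p ∈ (Finset.univ.filter fun p : V × V => T p.1 p.2) with w p.1 p.2 ≠ 0,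
          w p.1 p.2 :=
        (Finset.sum_filter_ne_zero _).symm
    _ ≤ ∑ p ∈ Reps.image F, w p.1 p.2 := by
        refine Finset.sum_le_sum_of_subset_of_nonneg (fun p hp => ?_) fun p _ _ => hw p.1 p.2
        simp only [Finset.mem_filter, Finset.mem_univ, true_and] at hp
        obtain ⟨hTp, hwp⟩ := hp
        obtain ⟨hpr, hpF⟩ := (hT p.1 p.2 hTp).resolve_left hwp
        obtain ⟨v, hv, hpv⟩ := hcover p.2 hpr
        exact Finset.mem_image.2 ⟨v, hv, by rw [← hF _ _ hpv, ← hpF]⟩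
    _ ≤ ∑ v ∈ Reps, w (F v).1 (F v).2 :=
        Finset.sum_image_le_of_nonneg fun p _ => hw p.1 p.2

lemma exists_transversal (hs : Equivalence s) (r : V) :
    ∃ Reps : Finset V, (∀ v ∈ Reps, ¬ s v r) ∧
      (∀ v ∈ Reps, ∀ u ∈ Reps, v ≠ u → ¬ s v u) ∧
      ∀ u, ¬ s u r → ∃ v ∈ Reps, s u v := by
  classical
  let S : Setoid V := ⟨s, hs⟩
  have hrep : ∀ v, s (⟦v⟧ : Quotient S).out v := fun v => Quotient.mk_out (s := S) v
  refine ⟨(Finset.univ.filter fun v => ¬ s v r).image fun v => (⟦v⟧ : Quotient S).out,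
    ?_, ?_, fun u hu => ⟨_, Finset.mem_image_of_mem _ (by simpa using hu), hs.symm (hrep u)⟩⟩
  · simp only [Finset.mem_image, Finset.mem_filter, Finset.mem_univ, true_and]
    rintro _ ⟨v, hvr, rfl⟩ h
    exact hvr (hs.trans (hs.symm (hrep v)) h)
  · simp only [Finset.mem_image, Finset.mem_filter, Finset.mem_univ, true_and]
    rintro _ ⟨v, -, rfl⟩ _ ⟨u, -, rfl⟩ hne h
    exact hne (congrArg Quotient.out (Quotient.sound
      (hs.trans (hs.symm (hrep v)) (hs.trans h (hrep u)))))

end Weight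

theorem min_weight_shortest_path_tree_general {V : Type*} [Fintype V]
    (E : V → V → Prop) (w : V → V → ℝ) (hw : ∀ u v, 0 ≤ w u v) (r : V)
    (T0 : V → V → Prop)
    (hT0 : IsBranching E T0 r ∧ ∀ v, ddist T0 w r v = ddist E w r v)
    (SP : V → V → Prop)
    (hSP : ∀ x y, SP x y ↔ E x y ∧ ddist E w r x + w x y = ddist E w r y)
    (Z : V → V → Prop) (hZ : ∀ u v, Z u v ↔ SP u v ∧ w u v = 0)
    (sc : V → V → Prop)
    (hsc : ∀ u v, sc u v ↔ Relation.ReflTransGen Z u v ∧ Relation.ReflTransGen Z v u) :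
    ∃ T : V → V → Prop,
      (IsBranching E T r ∧ ∀ v, ddist T w r v = ddist E w r v) ∧
      (∀ T' : V → V → Prop,
        (IsBranching E T' r ∧ ∀ v, ddist T' w r v = ddist E w r v) →
        bweight T w ≤ bweight T' w) ∧
      ∀ (Reps : Finset V) (μ : V → ℝ),
        (∀ v ∈ Reps, ¬ sc v r) →
        (∀ v ∈ Reps, ∀ u ∈ Reps, v ≠ u → ¬ sc v u) →
        (∀ u, ¬ sc u r → ∃ v ∈ Reps, sc u v) →
        (∀ v ∈ Reps,
          IsLeast {x | ∃ a b, SP a b ∧ sc b v ∧ ¬ sc a b ∧ w a b = x} (μ v)) →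
        bweight T w = ∑ v ∈ Reps, μ v := by
  obtain rfl : sc = SameComponent Z := funext₂ fun u v => propext (hsc u v)
  obtain rfl : Z = zeroSubgraph SP w := funext₂ fun u v => propext (hZ u v)
  obtain rfl : SP = spGraph E w r := funext₂ fun x y => propext (hSP x y)
  set SP := spGraph E w r
  set sc := SameComponent (zeroSubgraph SP w)
  have hs : Equivalence sc := equivalence_sameComponent _
  have hSPT : ∀ {T'}, IsBranching E T' r → (∀ v, ddist T' w r v = ddist E w r v) →
      ∀ a b, T' a b → SP a b := fun hT' hd _ _ => hT'.spGraph_of_ddist_eq hw hd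
  obtain ⟨F, hF, hFmin⟩ := exists_isMinEntering hs w fun v =>
    ReflTransGen.mono (hSPT hT0.1 hT0.2) _ _ (hT0.1.2.2.2 v)
  obtain ⟨T, hT⟩ := exists_isBranching <| reflTransGen_entryGraph (fun _ _ h => h.1)
    (fun _ _ => sameComponent_zeroSubgraph hw fun _ _ h => h.2) hF fun v hv =>
      let ⟨hG, hin, hout, _⟩ := hFmin v hv; ⟨hG, hin, hout⟩
  have hTSP : ∀ a b, T a b → SP a b := fun a b hab => by
    rcases hT.1 a b hab with ⟨hz, -⟩ | ⟨hb, hab⟩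
    · exact hz.1
    · simpa only [← hab] using (hFmin b hb).1
  have hupper : ∀ Reps : Finset V, (∀ u, ¬ sc u r → ∃ v ∈ Reps, sc u v) →
      bweight T w ≤ ∑ v ∈ Reps, w (F v).1 (F v).2 := fun Reps hcover =>
    bweight_le_sum hw hF hcover fun a b hab => (hT.1 a b hab).imp (fun h => h.1.2) id
  refine ⟨T, ⟨⟨fun a b h => (hTSP a b h).1, hT.2⟩, ddist_eq_of_forall_spGraph hw hTSP hT.2.2.2⟩,
    fun T' ⟨hT', hd⟩ => ?_, fun Reps μ hr hdisj hcover hμ => le_antisymm ?_ ?_⟩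
  · obtain ⟨Reps, hr, hdisj, hcover⟩ := exists_transversal hs r
    exact (hupper Reps hcover).trans <| sum_le_bweight hs hw hT'.2.2.2 hr hdisj
      fun v hv a b hab => (hFmin v (hr v hv)).2.2.2 a b (hSPT hT' hd a b hab)
  · refine (hupper Reps hcover).trans_eq (Finset.sum_congr rfl fun v hv => ?_)
    exact (hFmin v (hr v hv)).isLeast.unique (hμ v hv)
  · exact sum_le_bweight hs hw hT.2.2.2 hr hdisj fun v hv a b hab hbv hba =>
      (hμ v hv).2 ⟨a, b, hTSP a b hab, hbv, hba, rfl⟩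

/-- If a directed graph with nonnegative weights has a shortest-path
tree rooted at `r` (a branching from `r` preserving all distances from `r`), then a
minimum-weight shortest-path tree exists, and its weight equals the sum, over the
strongly connected components (not containing `r`) of the zero-weight subgraph of the
shortest-path subgraph, of the minimum weight of a shortest-path-subgraph edge
entering the component. -/
theorem min_weight_shortest_path_tree {V : Type*} [Fintype V]
    (E : V → V → Prop) (w : V → V → ℝ) (hw : ∀ u v, 0 ≤ w u v) (r : V)
    (hreach : ∀ v, Relation.ReflTransGen E r v)
    (T0 : V → V → Prop)
    (hT0 : IsBranching E T0 r ∧ ∀ v, ddist T0 w r v = ddist E w r v)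
    (SP : V → V → Prop)
    (hSP : ∀ x y, SP x y ↔ E x y ∧ ddist E w r x + w x y = ddist E w r y)
    (Z : V → V → Prop) (hZ : ∀ u v, Z u v ↔ SP u v ∧ w u v = 0)
    (sc : V → V → Prop)
    (hsc : ∀ u v, sc u v ↔ Relation.ReflTransGen Z u v ∧ Relation.ReflTransGen Z v u) :
    ∃ T : V → V → Prop,
      (IsBranching E T r ∧ ∀ v, ddist T w r v = ddist E w r v) ∧
      (∀ T' : V → V → Prop,
        (IsBranching E T' r ∧ ∀ v, ddist T' w r v = ddist E w r v) →
        bweight T w ≤ bweight T' w) ∧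
      ∀ (Reps : Finset V) (μ : V → ℝ),
        (∀ v ∈ Reps, ¬ sc v r) →
        (∀ v ∈ Reps, ∀ u ∈ Reps, v ≠ u → ¬ sc v u) →
        (∀ u, ¬ sc u r → ∃ v ∈ Reps, sc u v) →
        (∀ v ∈ Reps,
          IsLeast {x | ∃ a b, SP a b ∧ sc b v ∧ ¬ sc a b ∧ w a b = x} (μ v)) →
        bweight T w = ∑ v ∈ Reps, μ v :=
  min_weight_shortest_path_tree_general E w hw r T0 hT0 SP hSP Z hZ sc hsc
end
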